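/- Reflection symmetry: for all 0 ≤ k ≤ n and rationals a,b,c0,c∞, the generalized Eulerian numbers satisfy E(n, n−k)(a,b; c0, c∞) = E(n,k)(−a, b; c∞, c0). -/
import Mathlib


/-- Generalized Eulerian numbers E(n,k)(a,b;c0,c∞). -/
def gE (a b c0 ci : ℚ) : ℕ → ℕ → ℚ
  | 0, 0 => 1
  | 0, _+1 => 0
  | n+1, 0 => (-a * n + c0) * gE a b c0 ci n 0
  | n+1, k+1 => (-a * n + b * (k+1) + c0) * gE a b c0 ci n (k+1)
      + ((a+b) * n - b * k + ci) * gE a b c0 ci n k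

lemma gE_zero (a b c0 ci : ℚ) (n : ℕ) : ∀ k, n < k → gE a b c0 ci n k = 0 := by
  induction n with
  | zero => intro k hk; match k, hk with | k+1, _ => simp [gE]
  | succ n ih =>
    intro k hk
    match k, hk with
    | k+1, hk =>
      have h1 : gE a b c0 ci n (k+1) = 0 := ih _ (by omega)
      have h2 : gE a b c0 ci n k = 0 := ih _ (by omega)
      simp [gE, h1, h2]

theorem gE_reflection (a b c0 ci : ℚ) (n k : ℕ) (hkn : k ≤ n) :
    gE a b c0 ci n (n-k) = gE (-a) b ci c0 n k := by
  induction n generalizing a c0 ci k with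
  | zero => interval_cases k; simp [gE]
  | succ n ih =>
    match k, hkn with
    | 0, _ =>
      show gE a b c0 ci (n+1) (n+1) = gE (-a) b ci c0 (n+1) 0
      have h0 : gE a b c0 ci n (n+1) = 0 := gE_zero _ _ _ _ _ _ (by omega)
      have h1 : gE a b c0 ci n n = gE (-a) b ci c0 n 0 := by
        simpa using ih a c0 ci 0 (by omega)
      simp only [gE, h0, h1]
      ring
    | j+1, hkn =>
      have hj : j ≤ n := by omega
      rcases eq_or_lt_of_le hj with rfl | hjn
      · -- j = n, LHS index 0
        have h : j + 1 - (j + 1) = 0 := by omega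
        rw [h]
        have h1 : gE (-a) b ci c0 j (j+1) = 0 := gE_zero _ _ _ _ _ _ (by omega)
        have h2 : gE (-a) b ci c0 j j = gE a b c0 ci j 0 := by
          simpa using ih (-a) ci c0 0 (by omega)
        show gE a b c0 ci (j+1) 0 = gE (-a) b ci c0 (j+1) (j+1)
        simp only [gE, h1, h2]
        ring
      · -- j < n
        obtain ⟨m, hm⟩ : ∃ m, n - j = m + 1 := ⟨n - j - 1, by omega⟩
        have h : n + 1 - (j + 1) = m + 1 := by omega
        rw [h]
        have e1 : gE a b c0 ci n (m+1) = gE (-a) b ci c0 n j := by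
          have := ih a c0 ci j hj; rw [hm] at this; exact this
        have e2 : gE a b c0 ci n m = gE (-a) b ci c0 n (j+1) := by
          have := ih a c0 ci (j+1) (by omega)
          have : n - (j+1) = m := by omega
          rw [← this]; exact ih a c0 ci (j+1) (by omega)
        show gE a b c0 ci (n+1) (m+1) = gE (-a) b ci c0 (n+1) (j+1)
        simp only [gE, e1, e2]
        have hmj : (m : ℚ) = n - j - 1 := by
          have : m = n - j - 1 := by omega
          subst this; push_cast [Nat.cast_sub hj, Nat.cast_sub (by omega : 1 ≤ n - j)]; ring
        rw [hmj]; ring
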